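/- Let Ω ⊂ ℝⁿ be open and bounded, d_x = dist(x, ∂Ω). Let u ∈ C²(Ω) with finite weighted norms, and α a variable exponent with 0 < α⁻ ≤ α(x) ≤ α⁺ < 1. Fix x ∈ Ω, 0 < μ ≤ 1/2, d = μ d_x, B = B(x,d). Then d_x² |D_{ij}u(x)| ≤ 8 μ^{α⁻} [u]*_{2,α(·),Ω} + (2/μ) [u]*_{1,Ω}, where [u]*_{2,α(·),Ω} = sup_{x≠y} d_{x,y}^{2+α(x)} |D²u(x)−D²u(y)|/|x−y|^{α(x)} and [u]*_{1,Ω} = sup_y d_y |Du(y)|. -/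

import Mathlib

open Real Set Metric

noncomputable section

/-- Values of the weighted quotients of `[u]*_{2,α(·),Ω}`, measuring the Hölder
continuity of the full second derivative with weight `d_{x,y}^{2+α(x)}`. -/
def hessSemiSet {n : ℕ} (Ω : Set (EuclideanSpace ℝ (Fin n)))
    (α : EuclideanSpace ℝ (Fin n) → ℝ) (u : EuclideanSpace ℝ (Fin n) → ℝ) : Set ℝ :=
  {r | ∃ x ∈ Ω, ∃ y ∈ Ω, x ≠ y ∧
    r = min (Metric.infDist x (frontier Ω)) (Metric.infDist y (frontier Ω)) ^ (2 + α x) *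
        (‖iteratedFDerivWithin ℝ 2 u Ω x - iteratedFDerivWithin ℝ 2 u Ω y‖ / ‖x - y‖ ^ α x)}

/-- `[u]*_{1,Ω} = sup_y d_y |Du(y)|` (as `sSup`). -/
def gradSemi {n : ℕ} (Ω : Set (EuclideanSpace ℝ (Fin n)))
    (u : EuclideanSpace ℝ (Fin n) → ℝ) : ℝ :=
  sSup ((fun y => Metric.infDist y (frontier Ω) * ‖fderivWithin ℝ u Ω y‖) '' Ω)

/-!
The mean value theorem along the segment of length `2d`, `d = μ d_x`, through `x` in direction
`e_i` gives a point `z` with `|D_{ij}u(z)| ≤ sup_B |Du| / d`; every point of `B` has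
`d_y ≥ d_x / 2`, so this is at most `2 [u]*_1 / (μ d_x²)`. The difference
`D_{ij}u(x) - D_{ij}u(z)` is bounded by the Hölder quotient at `(x, z)`, where
`d_{x,z} ≥ d_x / 2` and `|x - z| ≤ μ d_x`: this yields the factor
`4 · 2^{α(x)} μ^{α(x)} ≤ 8 μ^{α⁻}`. If `d_x = 0` (e.g. the frontier is empty) the left side
vanishes.
-/

theorem half_infDist_le_infDist {X : Type*} [PseudoMetricSpace X] {s : Set X} {x y : X}
    (hy : dist y x ≤ infDist x s / 2) : infDist x s / 2 ≤ infDist y s := by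
  linarith [infDist_le_infDist_add_dist (x := x) (y := y) (s := s), dist_comm x y]

section NormedSpace

variable {E : Type*} [NormedAddCommGroup E] [NormedSpace ℝ E]

theorem ball_infDist_frontier_subset [FiniteDimensional ℝ E] {Ω : Set E} {x : E} (hx : x ∈ Ω) :
    ball x (infDist x (frontier Ω)) ⊆ Ω := by
  by_cases hΩ : Ω = univ
  · simp [hΩ]
  obtain ⟨y, hy, hxy⟩ := exists_mem_frontier_infDist_compl_eq_dist hx hΩ
  exact (ball_subset_ball (hxy ▸ infDist_le_dist_of_mem hy)).trans ball_infDist_compl_subset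

theorem abs_apply_le_norm_sub_add_abs_apply {ι : Type*} [Fintype ι]
    (A B : ContinuousMultilinearMap ℝ (fun _ : ι => E) ℝ) {m : ι → E} (hm : ∀ i, ‖m i‖ ≤ 1) :
    |A m| ≤ ‖A - B‖ + |B m| :=
  calc |A m| = |(A - B) m + B m| := by simp
    _ ≤ |(A - B) m| + |B m| := abs_add_le _ _
    _ ≤ ‖A - B‖ + |B m| := by
        gcongr
        simpa using (A - B).le_opNorm_mul_prod_of_le hm

theorem exists_abs_deriv_le_of_abs_le {ψ ψ' : ℝ → ℝ} {d M : ℝ} (hd : 0 < d)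
    (hψ : ∀ t ∈ Icc (-d) d, HasDerivAt ψ (ψ' t) t) (hM : ∀ t ∈ Icc (-d) d, |ψ t| ≤ M) :
    ∃ c ∈ Ioo (-d) d, |ψ' c| ≤ M / d := by
  obtain ⟨c, hc, hslope⟩ := exists_hasDerivAt_eq_slope ψ ψ' (neg_lt_self hd)
    (fun t ht => (hψ t ht).continuousAt.continuousWithinAt)
    (fun t ht => hψ t (Ioo_subset_Icc_self ht))
  refine ⟨c, hc, ?_⟩
  have hends : |ψ d - ψ (-d)| ≤ 2 * M :=
    calc |ψ d - ψ (-d)| ≤ |ψ d| + |ψ (-d)| := abs_sub _ _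
      _ ≤ M + M := add_le_add (hM d ⟨by linarith, le_rfl⟩) (hM (-d) ⟨le_rfl, by linarith⟩)
      _ = 2 * M := by ring
  rw [hslope, abs_div, abs_of_pos (by linarith : 0 < d - -d), div_le_div_iff₀ (by linarith) hd]
  nlinarith

/-- The mean value theorem for `t ↦ Du(x + t e) f` on `[-d, d]`. -/
theorem exists_abs_iteratedFDeriv_two_le {u : E → ℝ} {x e f : E} {d M : ℝ} (hd : 0 < d)
    (he : ‖e‖ = 1) (hf : ‖f‖ ≤ 1) (hu : ∀ y ∈ closedBall x d, ContDiffAt ℝ 2 u y)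
    (hM : ∀ y ∈ closedBall x d, ‖fderiv ℝ u y‖ ≤ M) :
    ∃ z ∈ closedBall x d, |iteratedFDeriv ℝ 2 u z ![e, f]| ≤ M / d := by
  have hline : ∀ t ∈ Icc (-d) d, x + t • e ∈ closedBall x d := fun t ht => by
    rw [mem_closedBall, dist_eq_norm, add_sub_cancel_left, norm_smul, he, mul_one,
      Real.norm_eq_abs]
    exact abs_le.2 ht
  have hderiv : ∀ t ∈ Icc (-d) d, HasDerivAt (fun s => fderiv ℝ u (x + s • e) f)
      (fderiv ℝ (fderiv ℝ u) (x + t • e) e f) t := fun t ht => by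
    have hDu : DifferentiableAt ℝ (fderiv ℝ u) (x + t • e) :=
      ((hu _ (hline t ht)).fderiv_right le_rfl).differentiableAt one_ne_zero
    have hmove : HasDerivAt (fun s : ℝ => x + s • e) e t := by
      simpa using ((hasDerivAt_id t).smul_const e).const_add x
    have hDu_line : HasDerivAt (fun s => fderiv ℝ u (x + s • e))
        (fderiv ℝ (fderiv ℝ u) (x + t • e) e) t :=
      hDu.hasFDerivAt.comp_hasDerivAt t hmove
    simpa using hDu_line.clm_apply (hasDerivAt_const t f)
  have hbound : ∀ t ∈ Icc (-d) d, |fderiv ℝ u (x + t • e) f| ≤ M := fun t ht => by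
    simpa using (fderiv ℝ u (x + t • e)).le_of_opNorm_le_of_le (hM _ (hline t ht)) hf
  obtain ⟨c, hc, hle⟩ := exists_abs_deriv_le_of_abs_le hd hderiv hbound
  refine ⟨x + c • e, hline c (Ioo_subset_Icc_self hc), ?_⟩
  rwa [iteratedFDeriv_two_apply]

end NormedSpace

theorem sq_mul_rpow_div_half_rpow_le {δ μ a b : ℝ} (hδ : 0 < δ) (hμ0 : 0 < μ) (hμ1 : μ ≤ 1)
    (hba : b ≤ a) (ha1 : a ≤ 1) :
    δ ^ 2 * (μ * δ) ^ a / (δ / 2) ^ (2 + a) ≤ 8 * μ ^ b := by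
  have hform : δ ^ 2 * (μ * δ) ^ a / (δ / 2) ^ (2 + a) = 4 * 2 ^ a * μ ^ a := by
    rw [rpow_add (by positivity), rpow_two, mul_rpow hμ0.le hδ.le,
      div_rpow hδ.le zero_le_two]
    have hδa : (0 : ℝ) < δ ^ a := rpow_pos_of_pos hδ a
    field_simp
    ring
  have h2a : (2 : ℝ) ^ a ≤ 2 := by
    simpa using rpow_le_rpow_of_exponent_le one_le_two ha1
  have hμa : μ ^ a ≤ μ ^ b := rpow_le_rpow_of_exponent_ge hμ0 hμ1 hba
  rw [hform]
  nlinarith [rpow_nonneg hμ0.le a, rpow_nonneg zero_le_two a]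

section Seminorms

variable {n : ℕ} {Ω : Set (EuclideanSpace ℝ (Fin n))} {α u : EuclideanSpace ℝ (Fin n) → ℝ}

theorem sSup_hessSemiSet_nonneg : 0 ≤ sSup (hessSemiSet Ω α u) :=
  Real.sSup_nonneg fun _ ⟨_, _, _, _, _, hr⟩ => hr ▸
    mul_nonneg (rpow_nonneg (le_min infDist_nonneg infDist_nonneg) _)
      (div_nonneg (norm_nonneg _) (rpow_nonneg (norm_nonneg _) _))

theorem gradSemi_nonneg : 0 ≤ gradSemi Ω u :=
  Real.sSup_nonneg <| by
    rintro _ ⟨y, -, rfl⟩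
    exact mul_nonneg infDist_nonneg (norm_nonneg _)

theorem norm_fderiv_le_gradSemi_div (hΩ : IsOpen Ω)
    (hb1 : BddAbove ((fun y => infDist y (frontier Ω) * ‖fderivWithin ℝ u Ω y‖) '' Ω))
    {y : EuclideanSpace ℝ (Fin n)} (hy : y ∈ Ω) {δ : ℝ} (hδ : 0 < δ)
    (hδy : δ ≤ infDist y (frontier Ω)) :
    ‖fderiv ℝ u y‖ ≤ gradSemi Ω u / δ := by
  have hle : infDist y (frontier Ω) * ‖fderiv ℝ u y‖ ≤ gradSemi Ω u := by
    rw [← fderivWithin_of_isOpen hΩ hy]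
    exact le_csSup hb1 ⟨y, hy, rfl⟩
  rw [le_div_iff₀ hδ]
  nlinarith [norm_nonneg (fderiv ℝ u y)]

theorem infDist_sq_mul_norm_sub_le_sSup_hessSemiSet (hb2 : BddAbove (hessSemiSet Ω α u))
    {x z : EuclideanSpace ℝ (Fin n)} (hx : x ∈ Ω) (hz : z ∈ Ω) {αm μ : ℝ} (hαm : 0 ≤ αm)
    (hαx : α x ∈ Icc αm 1) (hμ0 : 0 < μ) (hμ : μ ≤ 1 / 2) (hdx : 0 < infDist x (frontier Ω))
    (hzx : dist z x ≤ μ * infDist x (frontier Ω)) :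
    infDist x (frontier Ω) ^ 2 *
        ‖iteratedFDerivWithin ℝ 2 u Ω x - iteratedFDerivWithin ℝ 2 u Ω z‖ ≤
      8 * μ ^ αm * sSup (hessSemiSet Ω α u) := by
  have hS2 := sSup_hessSemiSet_nonneg (Ω := Ω) (α := α) (u := u)
  rcases eq_or_ne z x with rfl | hne
  · simp only [sub_self, norm_zero, mul_zero]
    positivity
  set dx := infDist x (frontier Ω)
  set a := α x
  set H := ‖iteratedFDerivWithin ℝ 2 u Ω x - iteratedFDerivWithin ℝ 2 u Ω z‖
  set m := min dx (infDist z (frontier Ω))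
  have ha : 0 ≤ a := hαm.trans hαx.1
  have hD : 0 < ‖x - z‖ := norm_pos_iff.2 (sub_ne_zero.2 hne.symm)
  have hDd : ‖x - z‖ ≤ μ * dx := by rwa [← dist_eq_norm, dist_comm]
  have hm : dx / 2 ≤ m := le_min (by linarith) (half_infDist_le_infDist (by nlinarith))
  have hquot : m ^ (2 + a) * (H / ‖x - z‖ ^ a) ≤ sSup (hessSemiSet Ω α u) :=
    le_csSup hb2 ⟨x, hx, z, hz, hne.symm, rfl⟩
  have hmpos : 0 < m ^ (2 + a) := rpow_pos_of_pos (by linarith) _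
  have hDpos : 0 < ‖x - z‖ ^ a := rpow_pos_of_pos hD a
  calc dx ^ 2 * H = dx ^ 2 * ‖x - z‖ ^ a / m ^ (2 + a) * (m ^ (2 + a) * (H / ‖x - z‖ ^ a)) := by
        field_simp
    _ ≤ dx ^ 2 * (μ * dx) ^ a / (dx / 2) ^ (2 + a) * sSup (hessSemiSet Ω α u) := by
        gcongr
    _ ≤ 8 * μ ^ αm * sSup (hessSemiSet Ω α u) :=
        mul_le_mul_of_nonneg_right
          (sq_mul_rpow_div_half_rpow_le hdx hμ0 (by linarith) hαx.1 hαx.2) hS2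

end Seminorms

theorem stmt_16_general {n : ℕ} (Ω : Set (EuclideanSpace ℝ (Fin n)))
    (hΩo : IsOpen Ω)
    (u α : EuclideanSpace ℝ (Fin n) → ℝ) (αm αp : ℝ) (hαm : 0 < αm) (hαp : αp < 1)
    (hα : ∀ x ∈ Ω, αm ≤ α x ∧ α x ≤ αp)
    (hu : ContDiffOn ℝ 2 u Ω)
    (hb2 : BddAbove (hessSemiSet Ω α u))
    (hb1 : BddAbove ((fun y => Metric.infDist y (frontier Ω) * ‖fderivWithin ℝ u Ω y‖) '' Ω))
    (x : EuclideanSpace ℝ (Fin n)) (hx : x ∈ Ω)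
    (μ : ℝ) (hμ0 : 0 < μ) (hμ : μ ≤ 1 / 2) :
    ∀ i j : Fin n,
      Metric.infDist x (frontier Ω) ^ 2 *
          |iteratedFDerivWithin ℝ 2 u Ω x ![EuclideanSpace.single i 1, EuclideanSpace.single j 1]| ≤
        8 * μ ^ αm * sSup (hessSemiSet Ω α u) + 2 / μ * gradSemi Ω u := by
  intro i j
  have hS1 := gradSemi_nonneg (Ω := Ω) (u := u)
  have hS2 := sSup_hessSemiSet_nonneg (Ω := Ω) (α := α) (u := u)
  rcases (infDist_nonneg (x := x) (s := frontier Ω)).eq_or_lt with hdx | hdx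
  · rw [← hdx, zero_pow two_ne_zero, zero_mul]
    positivity
  set dx := infDist x (frontier Ω)
  set v : Fin 2 → EuclideanSpace ℝ (Fin n) :=
    ![EuclideanSpace.single i 1, EuclideanSpace.single j 1]
  set D2 := iteratedFDerivWithin ℝ 2 u Ω
  have hB : closedBall x (μ * dx) ⊆ Ω :=
    (closedBall_subset_ball (by nlinarith)).trans (ball_infDist_frontier_subset hx)
  have hgrad : ∀ y ∈ closedBall x (μ * dx), ‖fderiv ℝ u y‖ ≤ gradSemi Ω u / (dx / 2) :=
    fun y hy => norm_fderiv_le_gradSemi_div hΩo hb1 (hB hy) (half_pos hdx)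
      (half_infDist_le_infDist ((mem_closedBall.1 hy).trans (by nlinarith)))
  obtain ⟨z, hz, hDz⟩ := exists_abs_iteratedFDeriv_two_le (e := EuclideanSpace.single i 1)
    (f := EuclideanSpace.single j 1) (mul_pos hμ0 hdx) (by simp)
    (by simp) (fun y hy => hu.contDiffAt (hΩo.mem_nhds (hB hy))) hgrad
  rw [← iteratedFDerivWithin_of_isOpen 2 hΩo (hB hz)] at hDz
  have hholder := infDist_sq_mul_norm_sub_le_sSup_hessSemiSet (u := u) hb2 hx (hB hz) hαm.le
    ⟨(hα x hx).1, by linarith [(hα x hx).2]⟩ hμ0 hμ hdx (mem_closedBall.1 hz)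
  have htri := abs_apply_le_norm_sub_add_abs_apply (D2 x) (D2 z) (m := v)
    (fun k => by fin_cases k <;> simp [v])
  calc dx ^ 2 * |D2 x v|
      ≤ dx ^ 2 * ‖D2 x - D2 z‖ + dx ^ 2 * (gradSemi Ω u / (dx / 2) / (μ * dx)) := by
        rw [← mul_add]; gcongr; exact htri.trans (by gcongr)
    _ = dx ^ 2 * ‖D2 x - D2 z‖ + 2 / μ * gradSemi Ω u := by field_simp
    _ ≤ _ := by gcongr

theorem stmt_16 {n : ℕ} (Ω : Set (EuclideanSpace ℝ (Fin n)))
    (hΩo : IsOpen Ω) (hΩb : Bornology.IsBounded Ω)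
    (u α : EuclideanSpace ℝ (Fin n) → ℝ) (αm αp : ℝ) (hαm : 0 < αm) (hαp : αp < 1)
    (hα : ∀ x ∈ Ω, αm ≤ α x ∧ α x ≤ αp)
    (hu : ContDiffOn ℝ 2 u Ω)
    (hb2 : BddAbove (hessSemiSet Ω α u))
    (hb1 : BddAbove ((fun y => Metric.infDist y (frontier Ω) * ‖fderivWithin ℝ u Ω y‖) '' Ω))
    (x : EuclideanSpace ℝ (Fin n)) (hx : x ∈ Ω)
    (μ : ℝ) (hμ0 : 0 < μ) (hμ : μ ≤ 1 / 2) :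
    ∀ i j : Fin n,
      Metric.infDist x (frontier Ω) ^ 2 *
          |iteratedFDerivWithin ℝ 2 u Ω x ![EuclideanSpace.single i 1, EuclideanSpace.single j 1]| ≤
        8 * μ ^ αm * sSup (hessSemiSet Ω α u) + 2 / μ * gradSemi Ω u :=
  stmt_16_general Ω hΩo u α αm αp hαm hαp hα hu hb2 hb1 x hx μ hμ0 hμ
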